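/- arXiv:2105.12046 — 7 statements merged into one kernel-verified Lean document; each statement's English description precedes it below -/
import Mathlib

section
/- Let F be a finite tree and let u and v be adjacent vertices of F. Then either the free multiplicity μ_F(u) is an integer multiple of μ_F(v), or μ_F(v) is an integer multiple of μ_F(u). -/
/-- The automorphism group of a simple graph, as a subgroup of the
permutation group of the vertex set. -/
def graphAut {V : Type*} (G : SimpleGraph V) : Subgroup (Equiv.Perm V) where
  carrier := {f | ∀ u v, G.Adj (f u) (f v) ↔ G.Adj u v}
  one_mem' := by intro u v; simp
  mul_mem' := by
    intro a b ha hb u v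
    simp only [Set.mem_setOf_eq] at *
    rw [Equiv.Perm.mul_apply, Equiv.Perm.mul_apply, ha, hb]
  inv_mem' := by
    intro a ha u v
    simpa using (ha (a⁻¹ u) (a⁻¹ v)).symm

/-- The free multiplicity of a vertex: the size of its orbit under the
automorphism group of the graph. -/
noncomputable def freeMult {V : Type*} (G : SimpleGraph V) (u : V) : ℕ :=
  Nat.card (MulAction.orbit (graphAut G) u)

open SimpleGraph

lemma tree_lemma {V : Type*} {G : SimpleGraph V}
    (hconn : G.Connected) (hacyc : G.IsAcyclic) {r z y1 y2 : V}
    (h1 : G.Adj z y1) (h2 : G.Adj z y2) (hy : y1 ≠ y2)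
    (hd1 : G.dist r y1 ≤ G.dist r z) (hd2 : G.dist r y2 ≤ G.dist r z) : False := by
  have key : ∀ y : V, G.Adj z y → G.dist r y ≤ G.dist r z →
      ∃ w : G.Walk z r, w.IsPath ∧ w.getVert 1 = y := by
    classical
    intro y hzy hdy
    obtain ⟨q, hq, hql⟩ := hconn.exists_path_of_dist r y
    have hzq : z ∉ q.support := by
      intro hmem
      have e1 : G.dist r z ≤ (q.takeUntil z hmem).length := dist_le _
      have e2 : G.dist z y ≤ (q.dropUntil z hmem).length := dist_le _
      have e3 : (q.takeUntil z hmem).length + (q.dropUntil z hmem).length = q.length := by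
        rw [← SimpleGraph.Walk.length_append, q.take_spec hmem]
      have e4 : 0 < G.dist z y := (hconn z y).pos_dist_of_ne hzy.ne
      omega
    refine ⟨Walk.cons hzy q.reverse, ?_, ?_⟩
    · rw [Walk.cons_isPath_iff]
      refine ⟨hq.reverse, ?_⟩
      simpa using hzq
    · simp [Walk.getVert_cons_succ]
  obtain ⟨w1, hw1, hg1⟩ := key y1 h1 hd1
  obtain ⟨w2, hw2, hg2⟩ := key y2 h2 hd2
  have : (⟨w1, hw1⟩ : G.Path z r) = ⟨w2, hw2⟩ := hacyc.path_unique _ _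
  rw [Subtype.mk.injEq] at this
  rw [← hg1, ← hg2, this] at hy
  exact hy rfl

lemma aut_adj {V : Type*} {G : SimpleGraph V} (g : graphAut G) (x y : V) :
    G.Adj (g • x) (g • y) ↔ G.Adj x y := g.2 x y

lemma smul_mem_orbit_iff' {V : Type*} {G : SimpleGraph V} (g : graphAut G) (x v : V) :
    g • x ∈ MulAction.orbit (graphAut G) v ↔ x ∈ MulAction.orbit (graphAut G) v := by
  constructor
  · intro ⟨h, hh⟩
    refine ⟨g⁻¹ * h, ?_⟩
    show (g⁻¹ * h) • v = x
    rw [mul_smul]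
    rw [show h • v = g • x from hh, inv_smul_smul]
  · intro ⟨h, hh⟩
    refine ⟨g * h, ?_⟩
    show (g * h) • v = g • x
    rw [mul_smul]
    rw [show h • v = x from hh]


/-- in a finite tree, for adjacent vertices `u` and `v`,
either `μ_F u` is an integer multiple of `μ_F v` or vice versa. -/
theorem freeMult_dvd_or_dvd_of_adj {V : Type*} [Fintype V] (G : SimpleGraph V)
    (hconn : G.Connected) (hacyc : G.IsAcyclic) {u v : V} (huv : G.Adj u v) :
    freeMult G v ∣ freeMult G u ∨ freeMult G u ∣ freeMult G v := by
  classical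
  set A := graphAut G with hA
  set Ou : Finset V := Set.toFinset (MulAction.orbit A u) with hOu
  set Ov : Finset V := Set.toFinset (MulAction.orbit A v) with hOv
  set d : V → ℕ := fun x => (Ov.filter (fun y => G.Adj x y)).card with hd
  set e : V → ℕ := fun y => (Ou.filter (fun x => G.Adj y x)).card with he
  -- d is constant on Ou
  have hdconst : ∀ x ∈ Ou, d x = d u := by
    rintro x hx
    rw [hOu, Set.mem_toFinset] at hx
    obtain ⟨g, rfl⟩ := hx
    refine Finset.card_bij' (fun y _ => g⁻¹ • y) (fun y _ => g • y) ?_ ?_ ?_ ?_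
    · intro y hy
      rw [Finset.mem_filter] at *
      rw [hOv, Set.mem_toFinset] at *
      refine ⟨(smul_mem_orbit_iff' g⁻¹ y v).2 hy.1, ?_⟩
      have h2 := (aut_adj g u (g⁻¹ • y)).1
      rw [smul_inv_smul] at h2
      exact h2 hy.2
    · intro y hy
      rw [Finset.mem_filter] at *
      rw [hOv, Set.mem_toFinset] at *
      exact ⟨(smul_mem_orbit_iff' g y v).2 hy.1, (aut_adj g u y).2 hy.2⟩
    · intro y _; exact smul_inv_smul g y
    · intro y _; exact inv_smul_smul g y
  have heconst : ∀ y ∈ Ov, e y = e v := by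
    rintro x hx
    rw [hOv, Set.mem_toFinset] at hx
    obtain ⟨g, rfl⟩ := hx
    refine Finset.card_bij' (fun y _ => g⁻¹ • y) (fun y _ => g • y) ?_ ?_ ?_ ?_
    · intro y hy
      rw [Finset.mem_filter] at *
      rw [hOu, Set.mem_toFinset] at *
      refine ⟨(smul_mem_orbit_iff' g⁻¹ y u).2 hy.1, ?_⟩
      have h2 := (aut_adj g v (g⁻¹ • y)).1
      rw [smul_inv_smul] at h2
      exact h2 hy.2
    · intro y hy
      rw [Finset.mem_filter] at *
      rw [hOu, Set.mem_toFinset] at *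
      exact ⟨(smul_mem_orbit_iff' g y u).2 hy.1, (aut_adj g v y).2 hy.2⟩
    · intro y _; exact smul_inv_smul g y
    · intro y _; exact inv_smul_smul g y
  -- double counting
  have hcount : Ou.card * d u = Ov.card * e v := by
    have h1 : ∑ x ∈ Ou, d x = Ou.card * d u := by
      rw [Finset.sum_congr rfl hdconst, Finset.sum_const, smul_eq_mul]
    have h2 : ∑ y ∈ Ov, e y = Ov.card * e v := by
      rw [Finset.sum_congr rfl heconst, Finset.sum_const, smul_eq_mul]
    rw [← h1, ← h2]
    simp only [hd, he, Finset.card_filter]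
    rw [Finset.sum_comm]
    apply Finset.sum_congr rfl
    intro y _
    apply Finset.sum_congr rfl
    intro x _
    simp [G.adj_comm]
  have hvOv : v ∈ Ov := by rw [hOv, Set.mem_toFinset]; exact MulAction.mem_orbit_self v
  have huOu : u ∈ Ou := by rw [hOu, Set.mem_toFinset]; exact MulAction.mem_orbit_self u
  have hd1 : 1 ≤ d u := by
    apply Finset.card_pos.2
    exact ⟨v, Finset.mem_filter.2 ⟨hvOv, huv⟩⟩
  have he1 : 1 ≤ e v := by
    apply Finset.card_pos.2
    exact ⟨u, Finset.mem_filter.2 ⟨huOu, huv.symm⟩⟩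
  -- the key claim
  have hkey : d u = 1 ∨ e v = 1 := by
    by_contra hcon
    push_neg at hcon
    have hd2 : 2 ≤ d u := by omega
    have he2 : 2 ≤ e v := by omega
    -- pick z in Ou ∪ Ov at maximal distance from u
    obtain ⟨z, hzS, hzmax⟩ := (Ou ∪ Ov).exists_max_image (fun x => G.dist u x)
      ⟨u, Finset.mem_union_left _ huOu⟩
    have : ∃ y1 y2 : V, y1 ∈ Ou ∪ Ov ∧ y2 ∈ Ou ∪ Ov ∧ y1 ≠ y2 ∧
        G.Adj z y1 ∧ G.Adj z y2 := by
      rcases Finset.mem_union.1 hzS with hz | hz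
      · have : 1 < (Ov.filter (fun y => G.Adj z y)).card := by
          rw [show (Ov.filter (fun y => G.Adj z y)).card = d z from rfl, hdconst z hz]; omega
        obtain ⟨y1, hy1, y2, hy2, hne⟩ := Finset.one_lt_card.1 this
        rw [Finset.mem_filter] at hy1 hy2
        exact ⟨y1, y2, Finset.mem_union_right _ hy1.1, Finset.mem_union_right _ hy2.1,
          hne, hy1.2, hy2.2⟩
      · have : 1 < (Ou.filter (fun y => G.Adj z y)).card := by
          rw [show (Ou.filter (fun y => G.Adj z y)).card = e z from rfl, heconst z hz]; omega
        obtain ⟨y1, hy1, y2, hy2, hne⟩ := Finset.one_lt_card.1 this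
        rw [Finset.mem_filter] at hy1 hy2
        exact ⟨y1, y2, Finset.mem_union_left _ hy1.1, Finset.mem_union_left _ hy2.1,
          hne, hy1.2, hy2.2⟩
    obtain ⟨y1, y2, hy1S, hy2S, hne, hzy1, hzy2⟩ := this
    exact tree_lemma hconn hacyc hzy1 hzy2 hne (hzmax y1 hy1S) (hzmax y2 hy2S)
  have hfu : freeMult G u = Ou.card := by
    rw [freeMult, Nat.card_eq_fintype_card, hOu, Set.toFinset_card]
  have hfv : freeMult G v = Ov.card := by
    rw [freeMult, Nat.card_eq_fintype_card, hOv, Set.toFinset_card]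
  rcases hkey with h | h
  · left
    rw [hfu, hfv]
    exact ⟨e v, by rw [← hcount, h, mul_one]⟩
  · right
    rw [hfu, hfv]
    exact ⟨d u, by rw [hcount, h, mul_one]⟩
end

section
/- Let F be a finite tree and let u, v, w be vertices such that u is adjacent to v and v is adjacent to w (with u ≠ w). Then v cannot have strictly maximal free multiplicity among the three nodes; that is, μ_F(v) ≤ μ_F(u) or μ_F(v) ≤ μ_F(w). -/
/-!
The sum of distances `s(x) = ∑_y d(y, x)` is invariant under automorphisms and, in a tree,
strictly convex along paths: `2 s(v) < s(u) + s(w)` for a path `u - v - w`, because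
`d(y, ·)` changes by exactly one along each edge and cannot decrease along both edges at `v`.
Hence `s(v) < s(u)` or `s(v) < s(w)`, and convexity also shows that every vertex has at most
one neighbour of smaller `s`. So if `s(v) < s(u)` for an edge `u - v`, every automorphism
fixing `u` fixes `v`; the stabilizer of `u` lies in that of `v`, and the orbit of `v` is at
most as large as that of `u`.
-/

theorem MulAction.card_orbit_le_of_stabilizer_le {G X : Type*} [Group G] [MulAction G X]
    {x y : X} [Finite (orbit G x)] (h : stabilizer G x ≤ stabilizer G y) :
    Nat.card (orbit G y) ≤ Nat.card (orbit G x) := by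
  have : Finite (G ⧸ stabilizer G x) := .of_equiv _ (orbitEquivQuotientStabilizer G x)
  have : (stabilizer G x).FiniteIndex := Subgroup.finiteIndex_of_finite_quotient
  rw [Nat.card_congr (orbitEquivQuotientStabilizer G x),
    Nat.card_congr (orbitEquivQuotientStabilizer G y)]
  exact Subgroup.index_antitone h

namespace SimpleGraph

variable {V V' : Type*} {G : SimpleGraph V} {G' : SimpleGraph V'}

theorem Hom.edist_le (f : G →g G') (u v : V) : G'.edist (f u) (f v) ≤ G.edist u v := by
  by_cases h : G.Reachable u v
  · obtain ⟨p, hp⟩ := h.exists_walk_length_eq_edist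
    rw [← hp, ← p.length_map f]
    exact SimpleGraph.edist_le _
  · rw [edist_eq_top_of_not_reachable h]
    exact le_top

theorem Iso.edist_eq (f : G ≃g G') (u v : V) : G'.edist (f u) (f v) = G.edist u v :=
  le_antisymm (f.toHom.edist_le u v) (by simpa using f.symm.toHom.edist_le (f u) (f v))

theorem Iso.dist_eq (f : G ≃g G') (u v : V) : G'.dist (f u) (f v) = G.dist u v := by
  rw [dist, dist, f.edist_eq]

theorem dist_apply_of_mem_graphAut {f : Equiv.Perm V} (hf : f ∈ graphAut G) (u v : V) :
    G.dist (f u) (f v) = G.dist u v :=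
  Iso.dist_eq (⟨f, hf _ _⟩ : G ≃g G) u v

theorem IsAcyclic.eq_of_adj_of_dist_add_one_eq (hG : G.IsAcyclic) {x y z₁ z₂ : V}
    (h₁ : G.Adj x z₁) (h₂ : G.Adj x z₂) (d₁ : G.dist y z₁ + 1 = G.dist y x)
    (d₂ : G.dist y z₂ + 1 = G.dist y x) : z₁ = z₂ := by
  have hyx : G.Reachable y x := Reachable.of_dist_ne_zero (by omega)
  obtain ⟨q₁, hq₁⟩ := (hyx.trans h₁.reachable).exists_walk_length_eq_dist
  obtain ⟨q₂, hq₂⟩ := (hyx.trans h₂.reachable).exists_walk_length_eq_dist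
  have hp₁ : (q₁.concat h₁.symm).IsPath :=
    Walk.isPath_of_length_eq_dist _ (by rw [Walk.length_concat, hq₁, d₁])
  have hp₂ : (q₂.concat h₂.symm).IsPath :=
    Walk.isPath_of_length_eq_dist _ (by rw [Walk.length_concat, hq₂, d₂])
  have := congrArg (fun p : G.Path y x => (p : G.Walk y x).penultimate)
    ((hG.subsingleton_path y x).elim ⟨_, hp₁⟩ ⟨_, hp₂⟩)
  simpa [Walk.penultimate_concat] using this

theorem IsTree.two_mul_dist_le_add (hG : G.IsTree) {u v w : V} (huv : G.Adj u v)
    (hvw : G.Adj v w) (huw : u ≠ w) (y : V) :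
    2 * G.dist y v ≤ G.dist y u + G.dist y w := by
  have not_both_closer : ¬(G.dist y u + 1 = G.dist y v ∧ G.dist y w + 1 = G.dist y v) :=
    fun h => huw (hG.isAcyclic.eq_of_adj_of_dist_add_one_eq huv.symm hvw h.1 h.2)
  rcases hG.dist_eq_dist_add_one_of_adj y huv with hu | hu <;>
    rcases hG.dist_eq_dist_add_one_of_adj y hvw with hw | hw <;> omega

variable [Fintype V]

noncomputable def distSum (G : SimpleGraph V) (x : V) : ℕ :=
  ∑ y, G.dist y x

theorem distSum_apply_of_mem_graphAut {f : Equiv.Perm V} (hf : f ∈ graphAut G) (x : V) :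
    G.distSum (f x) = G.distSum x := by
  rw [distSum, ← Equiv.sum_comp f]
  exact Finset.sum_congr rfl fun y _ => dist_apply_of_mem_graphAut hf y x

theorem IsTree.two_mul_distSum_lt_add (hG : G.IsTree) {u v w : V} (huv : G.Adj u v)
    (hvw : G.Adj v w) (huw : u ≠ w) :
    2 * G.distSum v < G.distSum u + G.distSum w := by
  have hv : 2 * G.dist v v < G.dist v u + G.dist v w := by
    rw [dist_self, dist_eq_one_iff_adj.mpr huv.symm]
    omega
  simpa [distSum, Finset.mul_sum, Finset.sum_add_distrib] using
    Finset.sum_lt_sum (fun y _ => hG.two_mul_dist_le_add huv hvw huw y) ⟨v, Finset.mem_univ v, hv⟩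

theorem IsTree.eq_of_adj_of_distSum_lt (hG : G.IsTree) {x z₁ z₂ : V} (h₁ : G.Adj x z₁)
    (h₂ : G.Adj x z₂) (s₁ : G.distSum z₁ < G.distSum x) (s₂ : G.distSum z₂ < G.distSum x) :
    z₁ = z₂ := by
  by_contra hne
  have := hG.two_mul_distSum_lt_add h₁.symm h₂ hne
  omega

theorem IsTree.stabilizer_le_of_adj_of_distSum_lt (hG : G.IsTree) {u v : V} (huv : G.Adj u v)
    (hs : G.distSum v < G.distSum u) :
    MulAction.stabilizer (graphAut G) u ≤ MulAction.stabilizer (graphAut G) v := by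
  rintro ⟨f, hf⟩ hfu
  simp only [MulAction.mem_stabilizer_iff, Subgroup.mk_smul, Equiv.Perm.smul_def] at hfu ⊢
  refine hG.eq_of_adj_of_distSum_lt (x := u) ?_ huv ?_ hs
  · simpa [hfu] using (hf u v).mpr huv
  · rwa [distSum_apply_of_mem_graphAut hf]

theorem IsTree.freeMult_le_of_adj_of_distSum_lt (hG : G.IsTree) {u v : V} (huv : G.Adj u v)
    (hs : G.distSum v < G.distSum u) : freeMult G v ≤ freeMult G u :=
  MulAction.card_orbit_le_of_stabilizer_le (hG.stabilizer_le_of_adj_of_distSum_lt huv hs)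

end SimpleGraph

/-- in a finite tree, for a path `u - v - w` (with `u ≠ w`),
the middle vertex `v` cannot have strictly maximal free multiplicity:
`μ_F(v) ≤ μ_F(u)` or `μ_F(v) ≤ μ_F(w)`. -/
theorem freeMult_middle_not_strict_max {V : Type*} [Fintype V] (G : SimpleGraph V)
    (hconn : G.Connected) (hacyc : G.IsAcyclic) {u v w : V}
    (huv : G.Adj u v) (hvw : G.Adj v w) (huw : u ≠ w) :
    freeMult G v ≤ freeMult G u ∨ freeMult G v ≤ freeMult G w := by
  have hG : G.IsTree := ⟨hconn, hacyc⟩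
  have hconvex := hG.two_mul_distSum_lt_add huv hvw huw
  by_cases hs : G.distSum v < G.distSum u
  · exact .inl (hG.freeMult_le_of_adj_of_distSum_lt huv hs)
  · exact .inr (hG.freeMult_le_of_adj_of_distSum_lt hvw.symm (by omega))
end

section
/- Let p : ℕ → ℝ satisfy p_i ≥ 0 for all i and ∑_{i≥0} p_i = 1, suppose the series H = ∑_{i≥0} p_i log₂(1/p_i) converges (with the convention p_i log₂(1/p_i) = 0 when p_i = 0), and let α > 1 be a real number. Then 2^{−H} ≤ (∑_{i≥0} p_i^α)^{1/(α−1)}; equivalently, the Rényi entropy H_α = (1/(α−1)) log₂(1/∑_{i≥0} p_i^α) satisfies H_α ≤ H. -/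
/-- for a probability mass function `p` on ℕ whose Shannon
entropy `H = ∑ pᵢ log₂(1/pᵢ)` is given by a convergent series, and a real
`α > 1`, one has `2^(−H) ≤ (∑ pᵢ^α)^(1/(α−1))`; equivalently the Rényi
entropy `H_α = (1/(α−1)) log₂(1/∑ pᵢ^α)` satisfies `H_α ≤ H`.
(Note that in ℝ the convention `pᵢ log₂(1/pᵢ) = 0` when `pᵢ = 0` holds
automatically, since `1/0 = 0` and `log₂ 0 = 0`.) -/
theorem renyi_le_shannon (p : ℕ → ℝ) (hp : ∀ i, 0 ≤ p i)
    (hsum : ∑' i, p i = 1)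
    (hH : Summable fun i => p i * Real.logb 2 (1 / p i))
    (H : ℝ) (hHdef : H = ∑' i, p i * Real.logb 2 (1 / p i))
    {α : ℝ} (hα : 1 < α) :
    (2 : ℝ) ^ (-H) ≤ (∑' i, p i ^ α) ^ (1 / (α - 1)) ∧
      (1 / (α - 1)) * Real.logb 2 (1 / ∑' i, p i ^ α) ≤ H := by
  have hlog2 : (0:ℝ) < Real.log 2 := Real.log_pos (by norm_num)
  have hα0 : (0:ℝ) < α - 1 := by linarith
  have hαne : α ≠ 0 := by positivity
  have hsummp : Summable p := by
    by_contra h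
    rw [tsum_eq_zero_of_not_summable h] at hsum
    norm_num at hsum
  have hple1 : ∀ i, p i ≤ 1 := by
    intro i
    rw [← hsum]
    exact Summable.le_tsum hsummp i fun j _ => hp j
  have hpow_le : ∀ i, p i ^ α ≤ p i := by
    intro i
    rcases eq_or_lt_of_le (hp i) with h | h
    · rw [← h, Real.zero_rpow hαne]
    · calc p i ^ α ≤ p i ^ (1:ℝ) :=
            Real.rpow_le_rpow_of_exponent_ge h (hple1 i) (by linarith)
        _ = p i := Real.rpow_one _
  have hsummpa : Summable fun i => p i ^ α :=
    hsummp.of_nonneg_of_le (fun i => Real.rpow_nonneg (hp i) α) hpow_le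
  set S := ∑' i, p i ^ α with hS
  have hSpos : 0 < S := by
    obtain ⟨i, hi⟩ : ∃ i, 0 < p i := by
      by_contra h
      push_neg at h
      have hz : ∀ i, p i = 0 := fun i => le_antisymm (h i) (hp i)
      simp [hz] at hsum
    exact lt_of_lt_of_le (Real.rpow_pos_of_pos hi α)
      (Summable.le_tsum hsummpa i fun j _ => Real.rpow_nonneg (hp j) α)
  have hfun : (fun i => p i * Real.log (1 / p i))
      = fun i => (p i * Real.logb 2 (1 / p i)) * Real.log 2 := by
    funext i
    rw [Real.logb]
    field_simp
  have hHln : Summable fun i => p i * Real.log (1 / p i) := by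
    rw [hfun]; exact hH.mul_right _
  have hL : (∑' i, p i * Real.log (1 / p i)) = H * Real.log 2 := by
    rw [hfun, tsum_mul_right, ← hHdef]
  have key : ∀ i, -(α-1) * (p i * Real.log (1 / p i)) - p i * Real.log S
      ≤ p i ^ α / S - p i := by
    intro i
    rcases eq_or_lt_of_le (hp i) with h | h
    · rw [← h]
      simp [Real.zero_rpow hαne]
    · have hx : 0 < p i ^ (α-1) / S := div_pos (Real.rpow_pos_of_pos h _) hSpos
      have hm := mul_le_mul_of_nonneg_left (Real.log_le_sub_one_of_pos hx) (hp i)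
      have h1 : Real.log (p i ^ (α-1) / S) = (α-1) * Real.log (p i) - Real.log S := by
        rw [Real.log_div (ne_of_gt (Real.rpow_pos_of_pos h _)) hSpos.ne',
          Real.log_rpow h]
      have h2 : p i * p i ^ (α-1) = p i ^ α := by
        have := Real.rpow_add h 1 (α-1)
        rw [Real.rpow_one, show (1:ℝ)+(α-1) = α by ring] at this
        exact this.symm
      rw [h1] at hm
      have hinv : Real.log (1 / p i) = -Real.log (p i) := by
        rw [one_div, Real.log_inv]
      rw [hinv]
      calc -(α-1) * (p i * -Real.log (p i)) - p i * Real.log S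
          = p i * ((α-1) * Real.log (p i) - Real.log S) := by ring
        _ ≤ p i * (p i ^ (α-1) / S - 1) := hm
        _ = p i ^ α / S - p i := by rw [mul_sub, mul_one, ← mul_div_assoc, h2]
  have hsl : Summable fun i => -(α-1) * (p i * Real.log (1 / p i)) - p i * Real.log S :=
    (hHln.mul_left _).sub (hsummp.mul_right _)
  have hsr : Summable fun i => p i ^ α / S - p i :=
    (hsummpa.div_const _).sub hsummp
  have main := Summable.tsum_le_tsum key hsl hsr
  rw [Summable.tsum_sub (hHln.mul_left _) (hsummp.mul_right _), tsum_mul_left, tsum_mul_right,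
    Summable.tsum_sub (hsummpa.div_const _) hsummp, tsum_div_const, hsum, hL, ← hS,
    div_self hSpos.ne'] at main
  -- main : -(α-1) * (H * Real.log 2) - 1 * Real.log S ≤ 1 - 1
  have main2 : -((α-1) * (H * Real.log 2)) ≤ Real.log S := by linarith
  constructor
  · rw [Real.rpow_def_of_pos (by norm_num : (0:ℝ) < 2),
      Real.rpow_def_of_pos hSpos, Real.exp_le_exp]
    calc Real.log 2 * -H = (-((α-1) * (H * Real.log 2))) / (α-1) := by
          field_simp
      _ ≤ Real.log S / (α-1) := by
          exact div_le_div_of_nonneg_right main2 hα0.le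
      _ = Real.log S * (1 / (α-1)) := by ring
  · have heq : (1/(α-1)) * Real.logb 2 (1/S) = (-Real.log S) / ((α-1) * Real.log 2) := by
      rw [Real.logb, one_div S, Real.log_inv]
      field_simp
    rw [heq, div_le_iff₀ (by positivity)]
    calc -Real.log S ≤ (α-1) * (H * Real.log 2) := by linarith
      _ = H * ((α-1) * Real.log 2) := by ring
end

section
/- Let ρ > 1 be a real number and let p : ℕ → ℝ satisfy p_i ≥ 0 for all i and ∑_{i≥0} p_i = 1, and suppose that ∑_{i≥0} p_i ρ^i = ∞ (i.e., E{ρ^ξ} = ∞ for a random variable ξ with mass function p). Then for infinitely many positive integers ℓ, ∑_{i > ℓ/log₂ρ} p_i ≥ 1/(ℓ² 2^ℓ); that is, P{ξ > ℓ/log₂ρ} ≥ ℓ^{−2} 2^{−ℓ} for infinitely many ℓ. -/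
open Filter

set_option maxHeartbeats 1000000 in

/-- if `ρ > 1` and `p` is a probability mass function on ℕ
with `E{ρ^ξ} = ∑ pᵢ ρ^i = ∞` (i.e. the series is not summable), then for
infinitely many positive integers `ℓ`,
`P{ξ > ℓ/log₂ρ} = ∑_{i > ℓ/log₂ρ} pᵢ ≥ 1/(ℓ² 2^ℓ)`. -/
theorem tail_lower_bound_frequently (p : ℕ → ℝ) (hp : ∀ i, 0 ≤ p i)
    (hsum : ∑' i, p i = 1) {ρ : ℝ} (hρ : 1 < ρ)
    (hdiv : ¬ Summable fun i => p i * ρ ^ i) :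
    ∃ᶠ ℓ : ℕ in atTop, 0 < ℓ ∧
      1 / ((ℓ : ℝ) ^ 2 * 2 ^ ℓ) ≤
        ∑' i : {i : ℕ // (ℓ : ℝ) / Real.logb 2 ρ < (i : ℝ)}, p i := by
  classical
  by_contra hcon
  rw [Filter.not_frequently] at hcon
  rw [eventually_atTop] at hcon
  obtain ⟨N, hN⟩ := hcon
  have hρ0 : (0:ℝ) < ρ := by linarith
  have hT : 0 < Real.logb 2 ρ := Real.logb_pos one_lt_two hρ
  set T := Real.logb 2 ρ with hTdef
  have hpsum : Summable p := by
    by_contra h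
    rw [tsum_eq_zero_of_not_summable h] at hsum; norm_num at hsum
  -- key pointwise bound
  have key : ∀ n : ℕ, ((N:ℝ) + 2) ≤ T * n → p n * ρ ^ n ≤ 8 / T ^ 2 * (1 / (n:ℝ) ^ 2) := by
    intro n hn
    have hTn2 : (2:ℝ) ≤ T * n := by
      have : (0:ℝ) ≤ N := Nat.cast_nonneg N
      linarith
    have hTn0 : (0:ℝ) ≤ T * n := by linarith
    set L : ℕ := ⌈T * n⌉₊ - 1 with hLdef
    have hceil2 : 2 ≤ ⌈T * n⌉₊ := by
      have h1 : (2:ℝ) ≤ (⌈T * n⌉₊ : ℝ) := le_trans hTn2 (Nat.le_ceil _)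
      exact_mod_cast h1
    have hLcast : (L:ℝ) = (⌈T * n⌉₊ : ℝ) - 1 := by
      have : (L:ℕ) + 1 = ⌈T * n⌉₊ := by rw [hLdef]; omega
      have h2 : ((L:ℕ) + 1 : ℝ) = (⌈T * n⌉₊ : ℝ) := by exact_mod_cast this
      push_cast at h2 ⊢
      linarith
    have hLlt : (L:ℝ) < T * n := by
      have := Nat.ceil_lt_add_one hTn0
      rw [hLcast]; linarith
    have hLe : T * n ≤ (L:ℝ) + 1 := by
      rw [hLcast]
      have := Nat.le_ceil (T * n)
      linarith
    have hLlow : T * n - 1 ≤ (L:ℝ) := by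
      rw [hLcast]
      have := Nat.le_ceil (T * n)
      linarith
    have hLN : N ≤ L := by
      have : (N:ℝ) ≤ (L:ℝ) := by linarith
      exact_mod_cast this
    have hL1 : 0 < L := by
      have : (0:ℝ) < (L:ℝ) := by linarith [(Nat.cast_nonneg N : (0:ℝ) ≤ (N:ℝ))]
      exact_mod_cast this
    have hLpos : (0:ℝ) < (L:ℝ) := by exact_mod_cast hL1
    -- tail bound from hN
    have htail := hN L hLN
    push_neg at htail
    have htail' := htail hL1
    -- p n ≤ tail L
    have hmem : ((L:ℝ)) / T < (n:ℝ) := by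
      rw [div_lt_iff₀ hT]
      linarith [hLlt]
    have hple : p n ≤ ∑' i : {i : ℕ // (L : ℝ) / T < (i : ℝ)}, p i := by
      exact Summable.le_tsum (hpsum.subtype _) (⟨n, hmem⟩ : {i : ℕ // (L : ℝ) / T < (i : ℝ)})
        (fun j _ => hp j)
    have hptail : p n ≤ 1 / ((L : ℝ) ^ 2 * 2 ^ L) := le_of_lt (lt_of_le_of_lt hple htail')
    -- ρ ^ n ≤ 2 * 2 ^ L
    have hrpow : ρ ^ n = (2:ℝ) ^ (T * n) := by
      have h2 : ρ = (2:ℝ) ^ T := (Real.rpow_logb two_pos (by norm_num) hρ0).symm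
      rw [h2, ← Real.rpow_natCast ((2:ℝ) ^ T) n, ← Real.rpow_mul (by norm_num)]
    have hρn : ρ ^ n ≤ 2 * 2 ^ L := by
      rw [hrpow]
      have h1 : (2:ℝ) ^ (T * n) ≤ (2:ℝ) ^ ((L:ℝ) + 1) :=
        Real.rpow_le_rpow_left_iff one_lt_two |>.mpr hLe
      have h2 : (2:ℝ) ^ ((L:ℝ) + 1) = 2 * 2 ^ L := by
        rw [Real.rpow_add two_pos, Real.rpow_one, Real.rpow_natCast]
        ring
      linarith
    have h2Lpos : (0:ℝ) < 2 ^ L := by positivity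
    have hbound : p n * ρ ^ n ≤ 2 / (L:ℝ) ^ 2 := by
      have h1 : p n * ρ ^ n ≤ (1 / ((L : ℝ) ^ 2 * 2 ^ L)) * (2 * 2 ^ L) := by
        apply mul_le_mul hptail hρn (pow_nonneg (le_of_lt hρ0) n)
        positivity
      have h2 : (1 / ((L : ℝ) ^ 2 * 2 ^ L)) * (2 * 2 ^ L) = 2 / (L:ℝ) ^ 2 := by
        field_simp
      linarith
    -- 2 / L^2 ≤ 8 / (T n)^2
    have hhalf : T * n / 2 ≤ (L:ℝ) := by linarith
    have hTn0' : (0:ℝ) < T * n := by linarith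
    have hfin : 2 / (L:ℝ) ^ 2 ≤ 8 / T ^ 2 * (1 / (n:ℝ) ^ 2) := by
      have hn0 : (0:ℝ) < (n:ℝ) := by
        rcases Nat.eq_zero_or_pos n with h | h
        · exfalso; rw [h] at hTn2; push_cast at hTn2; linarith
        · exact_mod_cast h
      have hsq : (T * n / 2) ^ 2 ≤ (L:ℝ) ^ 2 := by
        apply pow_le_pow_left₀ (by positivity) hhalf
      have key2 : (2:ℝ) ≤ (8 / T ^ 2 * (1 / (n:ℝ) ^ 2)) * (L:ℝ) ^ 2 := by
        calc (2:ℝ) = (8 / T ^ 2 * (1 / (n:ℝ) ^ 2)) * ((T * n / 2) ^ 2) := by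
              field_simp; ring
          _ ≤ _ := mul_le_mul_of_nonneg_left hsq (by positivity)
      rw [div_le_iff₀ (by positivity : (0:ℝ) < (L:ℝ) ^ 2)]
      exact key2
    linarith
  -- now summability
  apply hdiv
  obtain ⟨M, hM⟩ := exists_nat_ge (((N:ℝ) + 2) / T)
  rw [← summable_nat_add_iff M]
  have hg : Summable (fun i : ℕ => 8 / T ^ 2 * (1 / ((i + M : ℕ):ℝ) ^ 2)) := by
    apply Summable.mul_left
    exact (summable_nat_add_iff M).mpr
      ((Real.summable_one_div_nat_pow).mpr (by norm_num))
  have hnn : ∀ i : ℕ, 0 ≤ p (i + M) * ρ ^ (i + M) :=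
    fun i => mul_nonneg (hp _) (pow_nonneg (le_of_lt hρ0) _)
  have hle : ∀ i : ℕ, p (i + M) * ρ ^ (i + M) ≤ 8 / T ^ 2 * (1 / ((i + M : ℕ):ℝ) ^ 2) := by
    intro i
    apply key
    have h1 : ((N:ℝ) + 2) ≤ T * M := by
      rw [div_le_iff₀ hT] at hM; linarith
    have h2 : (M:ℝ) ≤ ((i + M : ℕ):ℝ) := by push_cast; linarith [Nat.cast_nonneg (α := ℝ) i]
    nlinarith [hT.le]
  exact Summable.of_nonneg_of_le hnn hle hg
end

section
/- Let ρ > 1 be a real number and let p : ℕ → ℝ satisfy p_i ≥ 0 for all i, ∑_{i≥0} p_i = 1 and ∑_{i≥0} i·p_i = 1, and suppose that ∑_{i≥0} p_i ρ^i = ∞. Let ζ be the size-biased random variable with mass function P{ζ = i} = i·p_i. Then for infinitely many positive integers ℓ, P{ζ > ℓ/log₂ρ} = ∑_{i > ℓ/log₂ρ} i·p_i ≥ 1/(log₂ρ · ℓ · 2^ℓ). -/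
open Filter

set_option maxHeartbeats 1000000 in
/-- if `ρ > 1` and `p` is a probability mass function on ℕ
with mean one and `∑ pᵢ ρ^i = ∞`, and `ζ` is the size-biased random variable
with `P{ζ = i} = i·pᵢ`, then for infinitely many positive integers `ℓ`,
`P{ζ > ℓ/log₂ρ} = ∑_{i > ℓ/log₂ρ} i·pᵢ ≥ 1/(log₂ρ · ℓ · 2^ℓ)`. -/
theorem size_biased_tail_lower_bound_frequently (p : ℕ → ℝ) (hp : ∀ i, 0 ≤ p i)
    (hsum : ∑' i, p i = 1) (hmean : ∑' i : ℕ, (i : ℝ) * p i = 1)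
    {ρ : ℝ} (hρ : 1 < ρ) (hdiv : ¬ Summable fun i => p i * ρ ^ i) :
    ∃ᶠ ℓ : ℕ in atTop, 0 < ℓ ∧
      1 / (Real.logb 2 ρ * (ℓ : ℝ) * 2 ^ ℓ) ≤
        ∑' i : {i : ℕ // (ℓ : ℝ) / Real.logb 2 ρ < (i : ℝ)}, ((i : ℕ) : ℝ) * p (i : ℕ) := by
  have hL : 0 < Real.logb 2 ρ := Real.logb_pos one_lt_two (by exact hρ)
  set L := Real.logb 2 ρ with hLdef
  have hρ0 : 0 < ρ := one_pos.trans hρ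
  have hm : Summable (fun i : ℕ => (i : ℝ) * p i) := by
    by_contra h
    rw [tsum_eq_zero_of_not_summable h] at hmean
    norm_num at hmean
  by_contra hcon
  obtain ⟨N, hN⟩ := eventually_atTop.mp (not_frequently.mp hcon)
  apply hdiv
  set i₀ := ⌈((N : ℝ) + 2) / L⌉₊ with hi₀def
  have hbound : ∀ i : ℕ, i₀ ≤ i → p i * ρ ^ i ≤ 4 / L ^ 2 * (1 / (i : ℝ) ^ 2) := by
    intro i hi
    have hLi : (N : ℝ) + 2 ≤ L * i := by
      have h1 : ((N : ℝ) + 2) / L ≤ i := Nat.ceil_le.mp hi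
      calc (N : ℝ) + 2 = ((N : ℝ) + 2) / L * L := by field_simp
        _ ≤ i * L := mul_le_mul_of_nonneg_right h1 hL.le
        _ = L * i := mul_comm _ _
    set ℓ := ⌈L * (i : ℝ)⌉₊ - 1 with hℓdef
    have hc : N + 2 ≤ ⌈L * (i : ℝ)⌉₊ := by
      have h1 := Nat.le_ceil (L * (i : ℝ))
      have : ((N + 2 : ℕ) : ℝ) ≤ (⌈L * (i : ℝ)⌉₊ : ℝ) := by push_cast; linarith
      exact_mod_cast this
    have hℓN : N ≤ ℓ := by omega
    have hℓpos : 0 < ℓ := by omega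
    have hcastℓ : (ℓ : ℝ) = (⌈L * (i : ℝ)⌉₊ : ℝ) - 1 := by
      rw [hℓdef, Nat.cast_sub (by omega), Nat.cast_one]
    have hup : (ℓ : ℝ) < L * i := by
      have h1 := Nat.ceil_lt_add_one (mul_nonneg hL.le (Nat.cast_nonneg i))
      rw [hcastℓ]; linarith
    have hlo : L * i - 1 ≤ (ℓ : ℝ) := by
      have h1 := Nat.le_ceil (L * (i : ℝ))
      rw [hcastℓ]; linarith
    have hLi2 : (2 : ℝ) ≤ L * i := by
      have : (0 : ℝ) ≤ N := Nat.cast_nonneg N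
      linarith
    have hℓhalf : L * i / 2 ≤ (ℓ : ℝ) := by linarith
    have hℓposR : (0 : ℝ) < ℓ := by linarith
    have hi1 : 1 ≤ i := by
      rcases Nat.eq_zero_or_pos i with h | h
      · subst h; norm_num at hLi2
      · exact h
    have hiR : (1 : ℝ) ≤ i := Nat.one_le_cast.mpr hi1
    have hiRpos : (0 : ℝ) < i := by linarith
    -- tail bound from the negated frequently statement
    have hN' := hN ℓ hℓN
    push_neg at hN'
    have htail := hN' hℓpos
    -- single-term lower bound on the tail
    have hmem : ((ℓ : ℕ) : ℝ) / L < (i : ℝ) := by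
      rw [div_lt_iff₀ hL]
      linarith [hup]
    have hsingle : (i : ℝ) * p i ≤
        ∑' j : {j : ℕ // ((ℓ : ℕ) : ℝ) / L < (j : ℝ)}, ((j : ℕ) : ℝ) * p (j : ℕ) :=
      Summable.le_tsum (hm.subtype _) ⟨i, hmem⟩
        (fun j _ => mul_nonneg (Nat.cast_nonneg _) (hp _))
    have hip : (i : ℝ) * p i < 1 / (L * ℓ * 2 ^ ℓ) := lt_of_le_of_lt hsingle htail
    -- ρ^i ≤ 2 * 2^ℓ
    have h2L : (2 : ℝ) ^ L = ρ := Real.rpow_logb two_pos (by norm_num) hρ0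
    have hρpow : ρ ^ i ≤ 2 * 2 ^ ℓ := by
      calc ρ ^ i = ((2 : ℝ) ^ L) ^ (i : ℕ) := by rw [h2L]
        _ = (2 : ℝ) ^ (L * (i : ℝ)) := by
            rw [← Real.rpow_natCast ((2 : ℝ) ^ L) i, ← Real.rpow_mul two_pos.le]
        _ ≤ (2 : ℝ) ^ ((ℓ : ℝ) + 1) := by
            apply Real.rpow_le_rpow_left_iff (by norm_num : (1:ℝ) < 2) |>.mpr
            linarith
        _ = 2 * 2 ^ ℓ := by
            rw [Real.rpow_add two_pos, Real.rpow_one, Real.rpow_natCast]; ring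
    have h2ℓpos : (0 : ℝ) < 2 ^ ℓ := by positivity
    have hρi0 : (0 : ℝ) ≤ ρ ^ i := pow_nonneg hρ0.le i
    have h3 : (i : ℝ) * (p i * ρ ^ i) ≤ 1 / (L * ℓ * 2 ^ ℓ) * (2 * 2 ^ ℓ) := by
      rw [← mul_assoc]
      exact mul_le_mul hip.le hρpow hρi0 (by positivity)
    have h5 : (i : ℝ) * (p i * ρ ^ i) ≤ 2 / (L * ℓ) := by
      have hrhs : 1 / (L * (ℓ : ℝ) * 2 ^ ℓ) * (2 * 2 ^ ℓ) = 2 / (L * ℓ) := by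
        field_simp
      rw [hrhs] at h3; exact h3
    have h6 : p i * ρ ^ i ≤ 2 / (L * ℓ * i) := by
      rw [le_div_iff₀ (by positivity)]
      calc p i * ρ ^ i * (L * ℓ * i) = (i : ℝ) * (p i * ρ ^ i) * (L * ℓ) := by ring
        _ ≤ 2 := (le_div_iff₀ (by positivity)).mp h5
    have h7 : 2 / (L * (ℓ : ℝ) * i) ≤ 4 / (L ^ 2 * (i : ℝ) ^ 2) := by
      rw [div_le_div_iff₀ (by positivity) (by positivity)]
      nlinarith [mul_le_mul_of_nonneg_left (show L * (i : ℝ) ≤ 2 * ℓ by linarith)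
        (show (0 : ℝ) ≤ L * i by positivity)]
    calc p i * ρ ^ i ≤ 4 / (L ^ 2 * (i : ℝ) ^ 2) := h6.trans h7
      _ = 4 / L ^ 2 * (1 / (i : ℝ) ^ 2) := by rw [div_mul_div_comm]; norm_num
  have hg : Summable (fun n : ℕ => 4 / L ^ 2 * (1 / (n : ℝ) ^ 2)) :=
    (Real.summable_one_div_nat_pow.mpr one_lt_two).mul_left _
  refine (summable_nat_add_iff i₀).mp ?_
  exact Summable.of_nonneg_of_le
    (fun n => mul_nonneg (hp _) (pow_nonneg hρ0.le _))
    (fun n => hbound (n + i₀) (Nat.le_add_left _ _))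
    ((summable_nat_add_iff i₀).mpr hg)
end

section
/- (Cycle lemma of Dwass.) Let n ≥ 1 and let x_1, …, x_n be nonnegative integers with ∑_{i=1}^n x_i = n − 1. Then there is exactly one index r ∈ {0, 1, …, n−1} such that the cyclic rotation (x_{r+1}, x_{r+2}, …, x_n, x_1, …, x_r) forms the degree sequence in preorder of a rooted ordered tree, i.e., such that ∑_{i=1}^{t} x_{((r+i−1) mod n)+1} ≥ t for all 1 ≤ t ≤ n − 1. -/
/-- Dwass' cycle lemma: if `x_0, …, x_{n-1}` are nonnegative
integers summing to `n − 1`, then there is exactly one rotation index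
`r ∈ {0, …, n−1}` such that the rotated sequence
`x_r, x_{r+1}, …` (indices mod `n`) forms the preorder degree sequence of a
rooted ordered tree, i.e. every proper partial sum of the first `t` rotated
terms is at least `t` for all `1 ≤ t ≤ n − 1`. -/
theorem dwass_cycle_lemma (n : ℕ) (hn : 1 ≤ n) (x : ℕ → ℕ)
    (hsum : ∑ i ∈ Finset.range n, x i = n - 1) :
    ∃! r : ℕ, r < n ∧
      ∀ t : ℕ, 1 ≤ t → t < n → t ≤ ∑ i ∈ Finset.range t, x ((r + i) % n) := by
  classical
  set S : ℕ → ℤ := fun k => (∑ i ∈ Finset.range k, (x (i % n) : ℤ)) - k with hS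
  have hstep : ∀ k, S (k + 1) = S k + x (k % n) - 1 := by
    intro k
    simp only [hS, Finset.sum_range_succ]
    push_cast
    ring
  have hper : ∀ k, S (k + n) = S k - 1 := by
    intro k
    induction k with
    | zero =>
      have h1 : ∀ i ∈ Finset.range n, (x (i % n) : ℤ) = x i := by
        intro i hi
        rw [Nat.mod_eq_of_lt (Finset.mem_range.mp hi)]
      have h2 : (∑ i ∈ Finset.range n, (x (i % n) : ℤ)) = (n : ℤ) - 1 := by
        rw [Finset.sum_congr rfl h1, ← Nat.cast_sum, hsum, Nat.cast_sub hn,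
          Nat.cast_one]
      simp [hS, h2]
    | succ k ih =>
      have hre : k + 1 + n = (k + n) + 1 := by ring
      rw [hre, hstep, hstep, ih, Nat.add_mod_right]
      ring
  have hsum' : ∀ r t : ℕ,
      S (r + t) - S r + t = ∑ i ∈ Finset.range t, (x ((r + i) % n) : ℤ) := by
    intro r t
    simp only [hS, Finset.sum_range_add]
    push_cast
    ring
  have hcond : ∀ r, ((∀ t, 1 ≤ t → t < n →
      t ≤ ∑ i ∈ Finset.range t, x ((r + i) % n)) ↔
      (∀ t, 1 ≤ t → t < n → S r ≤ S (r + t))) := by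
    intro r
    constructor <;> intro h t h1 h2 <;> have ht := h t h1 h2
    · have h3 : (t : ℤ) ≤ ∑ i ∈ Finset.range t, (x ((r + i) % n) : ℤ) := by
        exact_mod_cast ht
      rw [← hsum'] at h3
      linarith
    · have h3 : (t : ℤ) ≤ ∑ i ∈ Finset.range t, (x ((r + i) % n) : ℤ) := by
        rw [← hsum']
        linarith
      exact_mod_cast h3
  -- existence of a first argmin of S on [0, n)
  have hex : ∃ k, k < n ∧ ∀ j, j < n → S k ≤ S j := by
    obtain ⟨b, hb, hbmin⟩ := Finset.exists_min_image (Finset.range n) S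
      ⟨0, Finset.mem_range.mpr hn⟩
    exact ⟨b, Finset.mem_range.mp hb,
      fun j hj => hbmin j (Finset.mem_range.mpr hj)⟩
  set r := Nat.find hex with hr
  obtain ⟨hrn, hmin⟩ := Nat.find_spec hex
  have hstrict : ∀ j, j < r → S r < S j := by
    intro j hj
    have hjn : j < n := lt_trans hj hrn
    have hnot := Nat.find_min hex hj
    push_neg at hnot
    obtain ⟨j2, hj2n, hj2⟩ := hnot hjn
    exact lt_of_le_of_lt (hmin j2 hj2n) hj2
  refine ⟨r, ⟨hrn, ?_⟩, ?_⟩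
  · rw [hcond]
    intro t h1 h2
    by_cases hc : r + t < n
    · exact hmin _ hc
    · push_neg at hc
      have hj' : r + t - n < r := by omega
      have heq : r + t = (r + t - n) + n := by omega
      have := hper (r + t - n)
      have hs := hstrict _ hj'
      rw [heq, this]
      linarith
  · rintro r' ⟨hr'n, hcr'⟩
    rw [hcond] at hcr'
    by_contra hne
    rcases lt_or_gt_of_ne hne with hlt | hgt
    · -- r' < r
      have h1 : 1 ≤ r - r' := by omega
      have h2 : r - r' < n := by omega
      have := hcr' (r - r') h1 h2
      have heq : r' + (r - r') = r := by omega
      rw [heq] at this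
      exact absurd this (not_le.mpr (hstrict r' hlt))
    · -- r < r'
      have h1 : 1 ≤ n + r - r' := by omega
      have h2 : n + r - r' < n := by omega
      have := hcr' (n + r - r') h1 h2
      have heq : r' + (n + r - r') = r + n := by omega
      rw [heq, hper] at this
      have := hmin r' hr'n
      linarith
end

section
/- (Dwass.) Let ξ_1, …, ξ_n be independent identically distributed random variables taking values in the nonnegative integers, defined on a probability space. Then the probability that (ξ_1, …, ξ_n) forms the preorder degree sequence of a rooted ordered tree equals (1/n) times the probability that ∑_{i=1}^n ξ_i = n − 1; that is, P{∑_{i=1}^{t} ξ_i ≥ t for all 1 ≤ t < n, and ∑_{i=1}^n ξ_i = n − 1} = (1/n) P{∑_{i=1}^n ξ_i = n − 1}. -/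
/-!
Cycle lemma: if `y₀, …, y_{n-1}` sum to `n - 1`, the Łukasiewicz walk `t ↦ ∑_{i<t} yᵢ - t`,
continued periodically, loses exactly one unit per period, so exactly one of the `n` cyclic
rotations of `y` is a tree degree sequence, namely the rotation starting at the first minimum
of the walk. The law of `(ξ₀, …, ξ_{n-1})` is a product measure, hence invariant under rotations,
so `{∑ ξᵢ = n - 1}` splits into `n` disjoint events of equal probability, each a rotated copy of
the tree event.
-/

open Finset MeasureTheory ProbabilityTheory
open Fin.NatCast
open Function

section PeriodicDrop

variable {n : ℕ} {S : ℕ → ℤ}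

theorem exists_forall_le_add_of_periodic_drop (hn : 0 < n) (hS : ∀ a, S (a + n) = S a - 1) :
    ∃ k < n, ∀ t, 1 ≤ t → t < n → S k ≤ S (k + t) := by
  classical
  obtain ⟨j, hj, hmin⟩ := (range n).exists_min_image S (nonempty_range_iff.2 hn.ne')
  have hex : ∃ k, k < n ∧ S k = S j := ⟨j, mem_range.1 hj, rfl⟩
  obtain ⟨hkn, hkj⟩ := Nat.find_spec hex
  have hbefore : ∀ i < Nat.find hex, S j < S i := fun i hi =>
    (hmin i (mem_range.2 (hi.trans hkn))).lt_of_ne fun h =>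
      Nat.find_min hex hi ⟨hi.trans hkn, h.symm⟩
  -- Take the first minimiser of `S` on `[0, n)`: past `n` the walk is one below its value at
  -- an index before the minimiser, where it is strictly above the minimum.
  refine ⟨Nat.find hex, hkn, fun t ht htn => ?_⟩
  rcases lt_or_ge (Nat.find hex + t) n with h | h
  · exact hkj.symm ▸ hmin _ (mem_range.2 h)
  · have hwrap := hS (Nat.find hex + t - n)
    rw [Nat.sub_add_cancel h] at hwrap
    have := hbefore (Nat.find hex + t - n) (by omega)
    omega

theorem eq_of_forall_le_add_of_periodic_drop (hS : ∀ a, S (a + n) = S a - 1) {a b : ℕ}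
    (ha : a < n) (hb : b < n) (hSa : ∀ t, 1 ≤ t → t < n → S a ≤ S (a + t))
    (hSb : ∀ t, 1 ≤ t → t < n → S b ≤ S (b + t)) : a = b := by
  wlog hab : a < b generalizing a b
  · rcases (not_lt.1 hab).lt_or_eq with h | h
    · exact (this hb ha hSb hSa h).symm
    · exact h.symm
  have h₁ := hSa (b - a) (by omega) (by omega)
  have h₂ := hSb (a + n - b) (by omega) (by omega)
  rw [Nat.add_sub_cancel' hab.le] at h₁
  rw [Nat.add_sub_cancel' (by omega), hS] at h₂
  omega

end PeriodicDrop

section TreeDegreeSeq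

variable {n : ℕ} [NeZero n]

theorem Fin.sum_range_natCast_add {M : Type*} [AddCommMonoid M] (y : Fin n → M) (k t : ℕ) :
    ∑ i ∈ range (k + t), y i = ∑ i ∈ range k, y i + ∑ i ∈ range t, y (i + (k : Fin n)) := by
  simp only [sum_range_add, Nat.cast_add, add_comm (k : Fin n)]

theorem Fin.sum_range_comp_addRight {M : Type*} [AddCommMonoid M] (y : Fin n → M) (k : Fin n) :
    ∑ i ∈ range n, y (i + k) = ∑ i ∈ range n, y i := by
  rw [← Fin.sum_univ_eq_sum_range (fun i => y (i + k)), ← Fin.sum_univ_eq_sum_range (fun i => y i)]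
  simp only [Fin.cast_val_eq_self]
  exact Equiv.sum_comp (Equiv.addRight k) y

def IsTreeDegreeSeq (y : Fin n → ℕ) : Prop :=
  (∀ t, 1 ≤ t → t < n → t ≤ ∑ i ∈ range t, y i) ∧ ∑ i ∈ range n, y i = n - 1

/-- Indices `i : ℕ` are read in `Fin n`, i.e. modulo `n`, so the walk is defined for all `t` and
runs through `y` periodically. -/
def lukasiewiczWalk (y : Fin n → ℕ) (t : ℕ) : ℤ :=
  ∑ i ∈ range t, (y i : ℤ) - t

variable {y : Fin n → ℕ}

theorem lukasiewiczWalk_add_period (hy : ∑ i ∈ range n, y i = n - 1) (a : ℕ) :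
    lukasiewiczWalk y (a + n) = lukasiewiczWalk y a - 1 := by
  have hyZ : ∑ i ∈ range n, (y i : ℤ) = n - 1 := by
    rw [← Nat.cast_sum, hy, Nat.cast_sub NeZero.one_le, Nat.cast_one]
  rw [lukasiewiczWalk, lukasiewiczWalk, Fin.sum_range_natCast_add (fun i => (y i : ℤ)),
    Fin.sum_range_comp_addRight (fun i => (y i : ℤ)), hyZ]
  push_cast
  ring

theorem isTreeDegreeSeq_add_iff (hy : ∑ i ∈ range n, y i = n - 1) (k : ℕ) :
    IsTreeDegreeSeq (fun i => y (i + (k : Fin n))) ↔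
      ∀ t, 1 ≤ t → t < n → lukasiewiczWalk y k ≤ lukasiewiczWalk y (k + t) := by
  have hstep (t : ℕ) : lukasiewiczWalk y (k + t) - lukasiewiczWalk y k =
      ((∑ i ∈ range t, y (i + (k : Fin n)) : ℕ) : ℤ) - t := by
    rw [lukasiewiczWalk, lukasiewiczWalk, Fin.sum_range_natCast_add (fun i => (y i : ℤ))]
    push_cast
    ring
  simp only [IsTreeDegreeSeq, Fin.sum_range_comp_addRight, hy, and_true]
  refine forall_congr' fun t => imp_congr_right fun _ => imp_congr_right fun _ => ?_
  have := hstep t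
  constructor <;> intro h <;> omega

theorem existsUnique_isTreeDegreeSeq_add (hy : ∑ i ∈ range n, y i = n - 1) :
    ∃! k : Fin n, IsTreeDegreeSeq (fun i => y (i + k)) := by
  have hS := lukasiewiczWalk_add_period hy
  obtain ⟨k, hkn, hk⟩ := exists_forall_le_add_of_periodic_drop (NeZero.pos n) hS
  refine ⟨k, (isTreeDegreeSeq_add_iff hy k).2 hk, fun j hj => ?_⟩
  rw [← Fin.cast_val_eq_self j, isTreeDegreeSeq_add_iff hy] at hj
  rw [← Fin.cast_val_eq_self j,
    eq_of_forall_le_add_of_periodic_drop hS j.isLt hkn hj hk]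

theorem sum_eq_of_isTreeDegreeSeq_add {k : Fin n} (h : IsTreeDegreeSeq (fun i => y (i + k))) :
    ∑ i ∈ range n, y i = n - 1 :=
  Fin.sum_range_comp_addRight y k ▸ h.2

theorem measure_sum_eq_mul_measure_isTreeDegreeSeq (π : Measure (Fin n → ℕ))
    (hπ : ∀ k : Fin n, MeasurePreserving (fun (y : Fin n → ℕ) i => y (i + k)) π π) :
    π {y | ∑ i ∈ range n, y i = n - 1} = n * π {y | IsTreeDegreeSeq y} := by
  have hunion : {y : Fin n → ℕ | ∑ i ∈ range n, y i = n - 1} =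
      ⋃ k : Fin n, (fun y i => y (i + k)) ⁻¹' {y | IsTreeDegreeSeq y} := by
    ext y
    simp only [Set.mem_ofPred_eq, Set.mem_iUnion, Set.mem_preimage]
    exact ⟨fun hy => (existsUnique_isTreeDegreeSeq_add hy).exists,
      fun ⟨_, hk⟩ => sum_eq_of_isTreeDegreeSeq_add hk⟩
  have hdisj : Pairwise (Disjoint on
      fun k : Fin n => (fun (y : Fin n → ℕ) i => y (i + k)) ⁻¹' {y | IsTreeDegreeSeq y}) :=
    fun a b hab => Set.disjoint_left.2 fun y ha hb =>
      hab ((existsUnique_isTreeDegreeSeq_add (sum_eq_of_isTreeDegreeSeq_add ha)).unique ha hb)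
  rw [hunion, measure_iUnion hdisj fun _ => .of_discrete, tsum_fintype]
  simp only [(hπ _).measure_preimage MeasurableSet.of_discrete.nullMeasurableSet, sum_const,
    card_univ, Fintype.card_fin, nsmul_eq_mul]

end TreeDegreeSeq

theorem measurePreserving_pi_comp_equiv {ι α : Type*} [Fintype ι] [MeasurableSpace α]
    (ν : Measure α) [SigmaFinite ν] (e : ι ≃ ι) :
    MeasurePreserving (fun (y : ι → α) => y ∘ e) (Measure.pi fun _ => ν) (Measure.pi fun _ => ν) :=
  (measurePreserving_piCongrLeft (fun _ => ν) e).symm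

theorem ProbabilityTheory.iIndepFun.map_comp_eq_pi {Ω ι ι' β : Type*} [MeasurableSpace Ω]
    [MeasurableSpace β] [Fintype ι'] {μ : Measure Ω} {ξ : ι → Ω → β}
    (hξ : ∀ i, AEMeasurable (ξ i) μ) (hindep : iIndepFun ξ μ) {ν : Measure β}
    (hν : ∀ i, μ.map (ξ i) = ν) {g : ι' → ι} (hg : g.Injective) :
    μ.map (fun ω j => ξ (g j) ω) = Measure.pi fun _ => ν := by
  rw [(hindep.precomp hg).map_fun_eq_pi_map fun j => hξ (g j)]
  simp only [hν]

/-- Dwass: for i.i.d. ℕ-valued random variables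
`ξ_0, …, ξ_{n-1}`, the probability that `(ξ_0, …, ξ_{n-1})` forms the
preorder degree sequence of a rooted ordered tree equals `1/n` times the
probability that `∑ ξ_i = n − 1`. -/
theorem dwass_probability {Ω : Type*} [MeasurableSpace Ω] (μ : Measure Ω)
    [IsProbabilityMeasure μ] (n : ℕ) (hn : 1 ≤ n) (ξ : ℕ → Ω → ℕ)
    (hmeas : ∀ i, Measurable (ξ i))
    (hindep : iIndepFun ξ μ)
    (hident : ∀ i j, Measure.map (ξ i) μ = Measure.map (ξ j) μ) :
    μ {ω | (∀ t : ℕ, 1 ≤ t → t < n → t ≤ ∑ i ∈ Finset.range t, ξ i ω) ∧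
        ∑ i ∈ Finset.range n, ξ i ω = n - 1} =
      (n : ENNReal)⁻¹ * μ {ω | ∑ i ∈ Finset.range n, ξ i ω = n - 1} := by
  have : NeZero n := ⟨by omega⟩
  let X : Ω → Fin n → ℕ := fun ω i => ξ i ω
  have hX : Measurable X := measurable_pi_lambda _ fun i => hmeas i
  have hlaw : μ.map X = Measure.pi fun _ => μ.map (ξ 0) :=
    hindep.map_comp_eq_pi (fun i => (hmeas i).aemeasurable) (fun i => hident i 0)
      Fin.val_injective
  have hsum (ω : Ω) {t : ℕ} (ht : t ≤ n) : ∑ i ∈ range t, X ω i = ∑ i ∈ range t, ξ i ω :=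
    sum_congr rfl fun i hi => by simp only [X, Fin.val_cast_of_lt ((mem_range.1 hi).trans_le ht)]
  have htree : {ω | (∀ t : ℕ, 1 ≤ t → t < n → t ≤ ∑ i ∈ range t, ξ i ω) ∧
      ∑ i ∈ range n, ξ i ω = n - 1} = X ⁻¹' {y | IsTreeDegreeSeq y} := by
    ext ω
    simp only [Set.mem_ofPred_eq, Set.mem_preimage, IsTreeDegreeSeq, hsum ω le_rfl]
    exact and_congr_left' <| forall_congr' fun t => imp_congr_right fun _ =>
      imp_congr_right fun ht => by rw [hsum ω ht.le]
  have htotal : {ω | ∑ i ∈ range n, ξ i ω = n - 1} =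
      X ⁻¹' {y | ∑ i ∈ range n, y i = n - 1} := by
    ext ω
    simp only [Set.mem_ofPred_eq, Set.mem_preimage, hsum ω le_rfl]
  rw [htree, htotal, ← Measure.map_apply hX .of_discrete, ← Measure.map_apply hX .of_discrete,
    hlaw, measure_sum_eq_mul_measure_isTreeDegreeSeq _
      fun k => measurePreserving_pi_comp_equiv _ (Equiv.addRight k),
    ← mul_assoc, ENNReal.inv_mul_cancel (by simp [NeZero.ne]) (ENNReal.natCast_ne_top n), one_mul]
end
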